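/- Define θ_0, θ_1 as above and π_0(m,r) = max(0, ⌊(5r-m+2)/7⌋ - 5). Then for all integers r ≥ 1 and all m with 1 ≤ m ≤ 5r - 4, we have θ_0(m) + π_0(m,r) ≥ θ_1(r). -/
import Mathlib


/-- `θ₀(m) = 0` for `m ≤ 4`, and `⌊(5m-1)/7⌋ - 2` for `m ≥ 5`. -/
def theta0 (m : ℤ) : ℤ := if m ≤ 4 then 0 else (5 * m - 1) / 7 - 2

/-- `θ₁(m) = 0` for `m ≤ 7`, and `⌊(5m-2)/7⌋ - 5` for `m ≥ 8`. -/
def theta1 (m : ℤ) : ℤ := if m ≤ 7 then 0 else (5 * m - 2) / 7 - 5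

/-- `π₁(m,r) = ⌊(5r-m)/7⌋`. -/
def pi1 (m r : ℤ) : ℤ := (5 * r - m) / 7

/-- `π₀(m,r) = max(0, ⌊(5r-m+2)/7⌋ - 5)`. -/
def pi0 (m r : ℤ) : ℤ := max 0 ((5 * r - m + 2) / 7 - 5)

theorem stmt_9 : ∀ r m : ℤ, 1 ≤ r → 1 ≤ m → m ≤ 5 * r - 4 →
    theta0 m + pi0 m r ≥ theta1 r := by
  intro r m hr hm hmr
  simp only [theta0, theta1, pi0, ge_iff_le]
  rcases le_or_gt m 4 with h1 | h1 <;> rcases le_or_gt r 7 with h2 | h2 <;>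
    simp [h1, h2, not_le.mpr, le_max_iff] <;> omega
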